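/- arXiv:2603.03114 — 2 statements merged into one kernel-verified Lean document; each statement's English description precedes it below -/
import Mathlib

section
/- If U is a unitary operator on ℓ²(ℤ) that is banded with band width R > 0, then for every ψ ∈ D(X) one has ‖X U ψ − U X ψ‖ ≤ R(R+1)·‖ψ‖; in particular the commutator XU − UX, initially defined on D(X), extends uniquely to a bounded linear operator P on all of ℓ²(ℤ). -/
/-
A band matrix of width `N` is the sum of its `2N + 1` diagonals, and the `k`-th diagonal acts
as a weighted shift `ψ ↦ (n ↦ cₖ(n) ψ(n - k))` with weights `|cₖ(n)| = |⟪δₙ, U δₙ₋ₖ⟫| ≤ ‖U‖ = 1`.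
Since `X` is diagonal, the commutator `XU - UX` multiplies the `k`-th diagonal by `k`, so on `D(X)`
it agrees with the bounded operator `∑_{|k| ≤ N} k • (k-th diagonal)`, whose norm is at most
`∑_{|k| ≤ N} |k| = N (N + 1) ≤ R (R + 1)` for `N = ⌊R⌋`. Uniqueness holds because the basis
vectors `δₙ` lie in `D(X)`.
-/

open scoped ENNReal ComplexConjugate Classical
open Filter MeasureTheory

noncomputable section

abbrev l2Z : Type := lp (fun _ : ℤ => ℂ) 2

/-- The standard basis vector `δ_n` of `ℓ²(ℤ)`. -/
def deltaVec (n : ℤ) : l2Z := lp.single 2 n 1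

/-- Membership in the domain of the position operator `X`. -/
def InDomX (ψ : l2Z) : Prop := Memℓp (fun n : ℤ => (n : ℂ) * ψ n) 2

/-- The position operator `X`, defined (with junk value `0` off its domain). -/
def posX (ψ : l2Z) : l2Z :=
  if h : InDomX ψ then (⟨fun n : ℤ => (n : ℂ) * ψ n, h⟩ : l2Z) else 0

/-- A bounded operator on `ℓ²(ℤ)` is banded if its matrix elements vanish far from the
diagonal. -/
def Banded (U : l2Z →L[ℂ] l2Z) : Prop :=
  ∃ R : ℝ, 0 < R ∧ ∀ n m : ℤ, R < |(n : ℝ) - (m : ℝ)| →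
    (inner ℂ (deltaVec n) (U (deltaVec m)) : ℂ) = 0

/-- `‖X ψ‖²`, computed as an extended real (possibly `+∞`). -/
def XnormSq (ψ : l2Z) : ℝ≥0∞ := ∑' n : ℤ, ENNReal.ofReal ((n : ℝ) ^ 2 * ‖ψ n‖ ^ 2)

namespace lp

variable {α : Type*} {E : α → Type*} [∀ i, NormedAddCommGroup (E i)]

lemma norm_sq_eq_tsum (f : lp E 2) : ‖f‖ ^ 2 = ∑' i, ‖f i‖ ^ 2 := by
  simpa using lp.norm_rpow_eq_tsum (p := 2) (by norm_num) f

lemma summable_norm_sq (f : lp E 2) : Summable fun i => ‖f i‖ ^ 2 := by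
  simpa using (lp.memℓp f).summable (p := 2) (by norm_num)

end lp

lemma memℓp_two_of_summable_norm_sq {α : Type*} {E : α → Type*} [∀ i, NormedAddCommGroup (E i)]
    {f : ∀ i, E i} (hf : Summable fun i => ‖f i‖ ^ 2) : Memℓp f 2 :=
  memℓp_gen (by simpa using hf)

lemma inner_deltaVec_left (n : ℤ) (ψ : l2Z) : (inner ℂ (deltaVec n) ψ : ℂ) = ψ n := by
  simp [deltaVec, lp.inner_single_left]

lemma norm_deltaVec (n : ℤ) : ‖deltaVec n‖ = 1 := by
  simp [deltaVec, lp.norm_single]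

lemma lp_single_eq_smul_deltaVec (n : ℤ) (c : ℂ) : lp.single 2 n c = c • deltaVec n := by
  rw [deltaVec, ← lp.single_smul, smul_eq_mul, mul_one]

lemma norm_apply_deltaVec_le (T : l2Z →L[ℂ] l2Z) (m n : ℤ) : ‖T (deltaVec m) n‖ ≤ ‖T‖ :=
  calc ‖T (deltaVec m) n‖ ≤ ‖T (deltaVec m)‖ := lp.norm_apply_le_norm two_ne_zero _ n
    _ ≤ ‖T‖ * ‖deltaVec m‖ := T.le_opNorm _
    _ = ‖T‖ := by rw [norm_deltaVec, mul_one]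

lemma ContinuousLinearMap.ext_deltaVec {A B : l2Z →L[ℂ] l2Z}
    (h : ∀ n, A (deltaVec n) = B (deltaVec n)) : A = B :=
  lp.ext_continuousLinearMap ENNReal.ofNat_ne_top fun n => ContinuousLinearMap.ext fun c => by
    simp [lp_single_eq_smul_deltaVec, h]

lemma hasSum_apply_deltaVec_mul (T : l2Z →L[ℂ] l2Z) (ψ : l2Z) (n : ℤ) :
    HasSum (fun m => T (deltaVec m) n * ψ m) (T ψ n) := by
  have := (lp.hasSum_single ENNReal.ofNat_ne_top ψ).mapL ((innerSL ℂ (deltaVec n)).comp T)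
  simpa [lp_single_eq_smul_deltaVec, inner_deltaVec_left, mul_comm] using this

lemma norm_mul_sq_le_of_norm_le {a : ℂ} {C : ℝ} (ha : ‖a‖ ≤ C) (b : ℂ) :
    ‖a * b‖ ^ 2 ≤ C ^ 2 * ‖b‖ ^ 2 := by
  rw [norm_mul, mul_pow]
  gcongr

lemma summable_norm_sq_comp_sub (ψ : l2Z) (k : ℤ) : Summable fun n => ‖ψ (n - k)‖ ^ 2 :=
  (Equiv.subRight k).summable_iff.mpr (lp.summable_norm_sq ψ)

lemma tsum_norm_sq_comp_sub (ψ : l2Z) (k : ℤ) : ∑' n, ‖ψ (n - k)‖ ^ 2 = ‖ψ‖ ^ 2 := by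
  rw [lp.norm_sq_eq_tsum]
  exact (Equiv.subRight k).tsum_eq (fun n => ‖ψ n‖ ^ 2)

section WeightedShift

variable {c : ℤ → ℂ} {C : ℝ}

lemma summable_norm_sq_weightedShift (hc : ∀ n, ‖c n‖ ≤ C) (k : ℤ) (ψ : l2Z) :
    Summable fun n => ‖c n * ψ (n - k)‖ ^ 2 :=
  ((summable_norm_sq_comp_sub ψ k).mul_left _).of_nonneg_of_le (fun _ => by positivity)
    fun n => norm_mul_sq_le_of_norm_le (hc n) _

lemma tsum_norm_sq_weightedShift_le (hc : ∀ n, ‖c n‖ ≤ C) (k : ℤ) (ψ : l2Z) :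
    ∑' n, ‖c n * ψ (n - k)‖ ^ 2 ≤ (C * ‖ψ‖) ^ 2 :=
  calc ∑' n, ‖c n * ψ (n - k)‖ ^ 2 ≤ ∑' n, C ^ 2 * ‖ψ (n - k)‖ ^ 2 :=
        (summable_norm_sq_weightedShift hc k ψ).tsum_le_tsum
          (fun n => norm_mul_sq_le_of_norm_le (hc n) _)
          ((summable_norm_sq_comp_sub ψ k).mul_left _)
    _ = (C * ‖ψ‖) ^ 2 := by
        rw [tsum_mul_left, tsum_norm_sq_comp_sub, mul_pow]

def weightedShift (k : ℤ) (c : ℤ → ℂ) (hc : ∀ n, ‖c n‖ ≤ C) : l2Z →L[ℂ] l2Z :=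
  LinearMap.mkContinuous
    { toFun := fun ψ => ⟨fun n => c n * ψ (n - k),
        memℓp_two_of_summable_norm_sq (summable_norm_sq_weightedShift hc k ψ)⟩
      map_add' := fun ψ φ => lp.ext <| funext fun n => mul_add _ _ _
      map_smul' := fun a ψ => lp.ext <| funext fun n => mul_left_comm _ _ _ }
    C fun ψ => by
      refine le_of_pow_le_pow_left₀ two_ne_zero (mul_nonneg ((norm_nonneg _).trans (hc 0))
        (norm_nonneg ψ)) ?_
      rw [lp.norm_sq_eq_tsum]
      exact tsum_norm_sq_weightedShift_le hc k ψ

lemma weightedShift_apply (k : ℤ) (hc : ∀ n, ‖c n‖ ≤ C) (ψ : l2Z) (n : ℤ) :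
    weightedShift k c hc ψ n = c n * ψ (n - k) := rfl

lemma opNorm_weightedShift_le (k : ℤ) (hc : ∀ n, ‖c n‖ ≤ C) : ‖weightedShift k c hc‖ ≤ C :=
  LinearMap.mkContinuous_norm_le _ ((norm_nonneg _).trans (hc 0)) _

end WeightedShift

lemma posX_apply {ψ : l2Z} (hψ : InDomX ψ) (n : ℤ) : posX ψ n = n * ψ n := by
  rw [posX, dif_pos hψ]

lemma inDomX_deltaVec (n : ℤ) : InDomX (deltaVec n) := by
  have : (fun m : ℤ => (m : ℂ) * deltaVec n m) = ⇑((n : ℂ) • deltaVec n) := by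
    funext m
    by_cases h : m = n
    · subst h
      rfl
    · simp [deltaVec, h]
  rw [InDomX, this]
  exact lp.memℓp _

lemma sum_abs_Icc_neg_self (N : ℕ) : ∑ k ∈ Finset.Icc (-N : ℤ) N, |k| = N * (N + 1) := by
  induction N with
  | zero => simp
  | succ N ih =>
    have hIcc : Finset.Icc (-(N + 1 : ℤ)) (N + 1) =
        insert (-(N + 1 : ℤ)) (insert (N + 1 : ℤ) (Finset.Icc (-N : ℤ) N)) := by
      ext k
      simp only [Finset.mem_Icc, Finset.mem_insert]
      omega
    push_cast
    rw [hIcc, Finset.sum_insert (by simp only [Finset.mem_insert, Finset.mem_Icc]; omega),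
      Finset.sum_insert (by simp only [Finset.mem_Icc]; omega), ih, abs_neg,
      abs_of_nonneg (by omega : (0 : ℤ) ≤ N + 1)]
    ring

/-- Matrix entries `⟪δₙ, T δₘ⟫` are written as `T (deltaVec m) n`, see `inner_deltaVec_left`. -/
def HasBandWidth (T : l2Z →L[ℂ] l2Z) (N : ℕ) : Prop :=
  ∀ n m : ℤ, (N : ℤ) < |n - m| → T (deltaVec m) n = 0

lemma hasBandWidth_natFloor {T : l2Z →L[ℂ] l2Z} {R : ℝ}
    (hband : ∀ n m : ℤ, R < |(n : ℝ) - (m : ℝ)| →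
      (inner ℂ (deltaVec n) (T (deltaVec m)) : ℂ) = 0) :
    HasBandWidth T ⌊R⌋₊ := by
  intro n m hnm
  rw [← inner_deltaVec_left]
  apply hband
  have : ((⌊R⌋₊ : ℤ) : ℝ) + 1 ≤ ((|n - m| : ℤ) : ℝ) := by exact_mod_cast hnm
  push_cast at this
  linarith [Nat.lt_floor_add_one R]

def bandDiagonal (T : l2Z →L[ℂ] l2Z) (k : ℤ) : l2Z →L[ℂ] l2Z :=
  weightedShift k (fun n => T (deltaVec (n - k)) n) fun n => norm_apply_deltaVec_le T (n - k) n

def bandCommutator (T : l2Z →L[ℂ] l2Z) (N : ℕ) : l2Z →L[ℂ] l2Z :=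
  ∑ k ∈ Finset.Icc (-N : ℤ) N, (k : ℂ) • bandDiagonal T k

lemma bandCommutator_apply (T : l2Z →L[ℂ] l2Z) (N : ℕ) (ψ : l2Z) (n : ℤ) :
    bandCommutator T N ψ n =
      ∑ k ∈ Finset.Icc (-N : ℤ) N, (k : ℂ) * (T (deltaVec (n - k)) n * ψ (n - k)) := by
  rw [bandCommutator, sum_apply, lp.coeFn_sum, Finset.sum_apply]
  rfl

lemma opNorm_bandCommutator_le (T : l2Z →L[ℂ] l2Z) (N : ℕ) :
    ‖bandCommutator T N‖ ≤ N * (N + 1) * ‖T‖ :=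
  calc ‖bandCommutator T N‖
      ≤ ∑ k ∈ Finset.Icc (-N : ℤ) N, ‖(k : ℂ) • bandDiagonal T k‖ := norm_sum_le _ _
    _ ≤ ∑ k ∈ Finset.Icc (-N : ℤ) N, |(k : ℝ)| * ‖T‖ := by
        gcongr with k
        rw [norm_smul, Complex.norm_intCast]
        gcongr
        exact opNorm_weightedShift_le _ _
    _ = N * (N + 1) * ‖T‖ := by
        rw [← Finset.sum_mul]
        congr 1
        exact_mod_cast sum_abs_Icc_neg_self N

namespace HasBandWidth

variable {T : l2Z →L[ℂ] l2Z} {N : ℕ} (hT : HasBandWidth T N)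
include hT

lemma apply_eq_sum (ψ : l2Z) (n : ℤ) :
    T ψ n = ∑ k ∈ Finset.Icc (-N : ℤ) N, T (deltaVec (n - k)) n * ψ (n - k) := by
  have hzero : ∀ m ∉ (Finset.Icc (-N : ℤ) N).image (n - ·), T (deltaVec m) n * ψ m = 0 := by
    intro m hm
    rw [hT n m ?_, zero_mul]
    contrapose! hm
    exact Finset.mem_image.mpr ⟨n - m, Finset.mem_Icc.mpr (abs_le.mp hm), sub_sub_cancel n m⟩
  rw [(hasSum_apply_deltaVec_mul T ψ n).unique (hasSum_sum_of_ne_finset_zero hzero),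
    Finset.sum_image fun _ _ _ _ h => sub_right_injective h]

lemma natCast_mul_apply {ψ : l2Z} (hψ : InDomX ψ) (n : ℤ) :
    (n : ℂ) * T ψ n = T (posX ψ) n + bandCommutator T N ψ n := by
  rw [hT.apply_eq_sum, hT.apply_eq_sum, bandCommutator_apply, Finset.mul_sum,
    ← Finset.sum_add_distrib]
  refine Finset.sum_congr rfl fun k _ => ?_
  rw [posX_apply hψ]
  push_cast
  ring

lemma inDomX_apply {ψ : l2Z} (hψ : InDomX ψ) : InDomX (T ψ) := by
  have : (fun n : ℤ => (n : ℂ) * T ψ n) = fun n => T (posX ψ) n + bandCommutator T N ψ n :=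
    funext (hT.natCast_mul_apply hψ)
  rw [InDomX, this]
  exact (lp.memℓp _).add (lp.memℓp _)

lemma posX_apply_sub_apply_posX {ψ : l2Z} (hψ : InDomX ψ) :
    posX (T ψ) - T (posX ψ) = bandCommutator T N ψ :=
  lp.ext <| funext fun n => by
    rw [lp.coeFn_sub, Pi.sub_apply, posX_apply (hT.inDomX_apply hψ), hT.natCast_mul_apply hψ,
      add_sub_cancel_left]

end HasBandWidth

/-- If `U` is a unitary on `ℓ²(ℤ)` banded with band width `R > 0`, then for
every `ψ ∈ D(X)` one has `‖XUψ - UXψ‖ ≤ R(R+1)‖ψ‖`; in particular the commutator `XU - UX`,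
initially defined on `D(X)`, extends uniquely to a bounded operator `P` on all of `ℓ²(ℤ)`. -/
theorem stmt_2
    (U : l2Z →L[ℂ] l2Z) (hU : U ∈ unitary (l2Z →L[ℂ] l2Z))
    (R : ℝ) (hR : 0 < R)
    (hband : ∀ n m : ℤ, R < |(n : ℝ) - (m : ℝ)| →
      (inner ℂ (deltaVec n) (U (deltaVec m)) : ℂ) = 0) :
    (∀ ψ : l2Z, InDomX ψ → ‖posX (U ψ) - U (posX ψ)‖ ≤ R * (R + 1) * ‖ψ‖) ∧
      ∃! P : l2Z →L[ℂ] l2Z, ∀ ψ : l2Z, InDomX ψ → P ψ = posX (U ψ) - U (posX ψ) := by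
  have hUband : HasBandWidth U ⌊R⌋₊ := hasBandWidth_natFloor hband
  have hUnorm : ‖U‖ ≤ 1 :=
    U.opNorm_le_bound zero_le_one fun ψ => by rw [U.norm_map_of_mem_unitary hU, one_mul]
  have hfloor : (⌊R⌋₊ : ℝ) ≤ R := Nat.floor_le hR.le
  set P := bandCommutator U ⌊R⌋₊
  refine ⟨fun ψ hψ => ?_, P, fun ψ hψ => (hUband.posX_apply_sub_apply_posX hψ).symm,
    fun Q hQ => ContinuousLinearMap.ext_deltaVec fun n => ?_⟩
  · rw [hUband.posX_apply_sub_apply_posX hψ]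
    calc ‖P ψ‖ ≤ ‖P‖ * ‖ψ‖ := P.le_opNorm ψ
      _ ≤ ⌊R⌋₊ * (⌊R⌋₊ + 1) * ‖U‖ * ‖ψ‖ := by gcongr; exact opNorm_bandCommutator_le U _
      _ ≤ R * (R + 1) * 1 * ‖ψ‖ := by gcongr
      _ = R * (R + 1) * ‖ψ‖ := by rw [mul_one]
  · rw [hQ _ (inDomX_deltaVec n), hUband.posX_apply_sub_apply_posX (inDomX_deltaVec n)]

end
end

section
/- Let U be a banded unitary operator on ℓ²(ℤ) admitting an orthonormal basis (φ_j)_{j≥1} of ℓ²(ℤ) consisting of eigenvectors of U, each belonging to D(X). Let φ and ψ be eigenvectors of U lying in D(X), and let P denote the bounded extension of XU − UX to ℓ²(ℤ), with P(s) := U^{−s} P U^{s}. Then lim_{t→∞} (1/t²) Σ_{s=0}^{t−1} Σ_{s̃=0}^{t−1} ⟨P(s)φ, P(s̃)ψ⟩ = 0. -/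
/-!
Since `U U⁻⁽ˢ⁺¹⁾ = U⁻ˢ`, the conjugate `U⁻ˢ P Uˢ χ` equals `U (U⁻⁽ˢ⁺¹⁾ X Uˢ⁺¹ χ) - U (U⁻ˢ X Uˢ χ)`,
so `∑_{s<t} P(s) χ` telescopes and has norm at most `‖X Uᵗ χ‖ + ‖X χ‖`. For an eigenvector
`χ ∈ D(X)` the eigenvalue has modulus one, so this is at most `2 ‖X χ‖` uniformly in `t`. The double
sum is the inner product of two such partial sums, hence bounded, and dividing by `t²` sends it to 0.
-/

open scoped ENNReal ComplexConjugate Classical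
open Filter MeasureTheory

noncomputable section

section Telescoping

variable {𝕜 H : Type*} [RCLike 𝕜] [NormedAddCommGroup H] [InnerProductSpace 𝕜 H] [CompleteSpace H]
  {U P : H →L[𝕜] H} {X : H → H} {D : Set H}

lemma conj_pow_apply_eq_sub (hU : U ∈ unitary (H →L[𝕜] H))
    (hP : ∀ χ ∈ D, P χ = X (U χ) - U (X χ)) {χ : H} {s : ℕ} (hχ : (U ^ s) χ ∈ D) :
    (star U ^ s) (P ((U ^ s) χ)) =
      U ((star U ^ (s + 1)) (X ((U ^ (s + 1)) χ))) - U ((star U ^ s) (X ((U ^ s) χ))) := by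
  have hcomm : (star U ^ s) (U (X ((U ^ s) χ))) = U ((star U ^ s) (X ((U ^ s) χ))) :=
    congr($(((commute_unitary_self_star hU).pow_right s).eq.symm) (X ((U ^ s) χ)))
  have hshift : U * star U ^ (s + 1) = star U ^ s := by
    rw [pow_succ', ← mul_assoc, Unitary.mul_star_self_of_mem hU, one_mul]
  rw [hP _ hχ, map_sub, hcomm, ← hshift, pow_succ' U s]
  rfl

lemma norm_sum_conj_pow_apply_le (hU : U ∈ unitary (H →L[𝕜] H))
    (hP : ∀ χ ∈ D, P χ = X (U χ) - U (X χ)) {χ : H} (hχ : ∀ s, (U ^ s) χ ∈ D) (t : ℕ) :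
    ‖∑ s ∈ Finset.range t, (star U ^ s) (P ((U ^ s) χ))‖ ≤ ‖X ((U ^ t) χ)‖ + ‖X χ‖ := by
  rw [Finset.sum_congr rfl fun s _ => conj_pow_apply_eq_sub hU hP (hχ s),
    Finset.sum_range_sub (fun s => U ((star U ^ s) (X ((U ^ s) χ))))]
  calc _ ≤ _ := norm_sub_le _ _
    _ = ‖X ((U ^ t) χ)‖ + ‖X χ‖ := by
      simp only [ContinuousLinearMap.norm_map_of_mem_unitary hU,
        ContinuousLinearMap.norm_map_of_mem_unitary (pow_mem (Unitary.star_mem hU) t), pow_zero,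
        one_apply_eq_self]

end Telescoping

lemma ContinuousLinearMap.pow_apply_of_apply_eq_smul {R M : Type*} [Semiring R] [TopologicalSpace M]
    [AddCommMonoid M] [Module R M] {U : M →L[R] M} {χ : M} {w : R} (hw : U χ = w • χ) (s : ℕ) :
    (U ^ s) χ = w ^ s • χ := by
  induction s with
  | zero => simp
  | succ s ih =>
    rw [pow_succ']
    change U ((U ^ s) χ) = _
    rw [ih, map_smul, hw, smul_smul, ← pow_succ]

lemma norm_eigenvalue_of_mem_unitary {𝕜 H : Type*} [RCLike 𝕜] [NormedAddCommGroup H]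
    [InnerProductSpace 𝕜 H] [CompleteSpace H] {U : H →L[𝕜] H} {χ : H} {w : 𝕜}
    (hU : U ∈ unitary (H →L[𝕜] H)) (hχ : χ ≠ 0) (hw : U χ = w • χ) : ‖w‖ = 1 := by
  have h := ContinuousLinearMap.norm_map_of_mem_unitary hU χ
  rwa [hw, norm_smul, mul_eq_right₀ (norm_ne_zero_iff.mpr hχ)] at h

lemma InDomX.smul {χ : l2Z} (h : InDomX χ) (c : ℂ) : InDomX (c • χ) := by
  have : (fun n : ℤ => (n : ℂ) * (c • χ) n) = c • fun n : ℤ => (n : ℂ) * χ n := by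
    ext n
    simp only [lp.coeFn_smul, Pi.smul_apply, smul_eq_mul]
    ring
  rw [InDomX, this]
  exact h.const_smul c

lemma posX_smul {χ : l2Z} (h : InDomX χ) (c : ℂ) : posX (c • χ) = c • posX χ := by
  rw [posX, posX, dif_pos (h.smul c), dif_pos h]
  ext n
  simp only [lp.coeFn_smul, Pi.smul_apply, smul_eq_mul]
  ring

lemma norm_sum_conj_pow_apply_le_of_eigenvector {U P : l2Z →L[ℂ] l2Z}
    (hU : U ∈ unitary (l2Z →L[ℂ] l2Z))
    (hP : ∀ χ : l2Z, InDomX χ → P χ = posX (U χ) - U (posX χ))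
    {χ : l2Z} (hχ : InDomX χ) (hχ0 : χ ≠ 0) {w : ℂ} (hw : U χ = w • χ) (t : ℕ) :
    ‖∑ s ∈ Finset.range t, (star U ^ s) (P ((U ^ s) χ))‖ ≤ 2 * ‖posX χ‖ := by
  have hpow := U.pow_apply_of_apply_eq_smul hw
  calc _ ≤ ‖posX ((U ^ t) χ)‖ + ‖posX χ‖ := norm_sum_conj_pow_apply_le (D := {χ | InDomX χ})
        hU hP (fun s => by rw [hpow s]; exact hχ.smul _) t
    _ = 2 * ‖posX χ‖ := by
      rw [hpow, posX_smul hχ, norm_smul, norm_pow, norm_eigenvalue_of_mem_unitary hU hχ0 hw,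
        one_pow, one_mul, two_mul]

lemma tendsto_one_div_sq_mul_of_norm_le {f : ℕ → ℂ} {C : ℝ} (hf : ∀ t, ‖f t‖ ≤ C) :
    Tendsto (fun t : ℕ => 1 / (t : ℂ) ^ 2 * f t) atTop (nhds 0) := by
  refine Tendsto.zero_mul_isBoundedUnder_le ?_ ⟨C, eventually_map.mpr (Eventually.of_forall hf)⟩
  simpa only [one_div, inv_pow, zero_pow two_ne_zero] using
    (tendsto_one_div_atTop_nhds_zero_nat (𝕜 := ℂ)).pow 2

theorem stmt_5_general
    (U : l2Z →L[ℂ] l2Z) (hU : U ∈ unitary (l2Z →L[ℂ] l2Z))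
    (P : l2Z →L[ℂ] l2Z)
    (hP : ∀ χ : l2Z, InDomX χ → P χ = posX (U χ) - U (posX χ))
    (φ ψ : l2Z) (hφ : InDomX φ) (hψ : InDomX ψ) (hφ0 : φ ≠ 0) (hψ0 : ψ ≠ 0)
    (hφe : ∃ w : ℂ, U φ = w • φ) (hψe : ∃ z : ℂ, U ψ = z • ψ) :
    Tendsto
      (fun t : ℕ => (1 / (t : ℂ) ^ 2) *
        ∑ s ∈ Finset.range t, ∑ s' ∈ Finset.range t,
          (inner ℂ (((star U) ^ s) (P ((U ^ s) φ))) (((star U) ^ s') (P ((U ^ s') ψ))) : ℂ))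
      atTop (nhds 0) := by
  obtain ⟨w, hw⟩ := hφe
  obtain ⟨z, hz⟩ := hψe
  refine tendsto_one_div_sq_mul_of_norm_le (C := 2 * ‖posX φ‖ * (2 * ‖posX ψ‖)) fun t => ?_
  simp_rw [← inner_sum, ← sum_inner]
  exact (norm_inner_le_norm _ _).trans <| mul_le_mul
    (norm_sum_conj_pow_apply_le_of_eigenvector hU hP hφ hφ0 hw t)
    (norm_sum_conj_pow_apply_le_of_eigenvector hU hP hψ hψ0 hz t) (norm_nonneg _) (by positivity)

/-- Let `U` be a banded unitary on `ℓ²(ℤ)` admitting an orthonormal basis of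
eigenvectors each belonging to `D(X)`, let `φ, ψ` be eigenvectors of `U` lying in `D(X)`, and
let `P` denote the bounded extension of `XU - UX`, with `P(s) = U⁻ˢ P Uˢ`.  Then
`(1/t²) ∑_{s=0}^{t-1} ∑_{s̃=0}^{t-1} ⟨P(s)φ, P(s̃)ψ⟩ → 0` as `t → ∞`. -/
theorem stmt_5
    (U : l2Z →L[ℂ] l2Z) (hU : U ∈ unitary (l2Z →L[ℂ] l2Z)) (hband : Banded U)
    (Φ : ℕ → l2Z) (hON : Orthonormal ℂ Φ)
    (hcomplete : (Submodule.span ℂ (Set.range Φ)).topologicalClosure = ⊤)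
    (heigB : ∀ j, ∃ z : ℂ, U (Φ j) = z • Φ j)
    (hdomB : ∀ j, InDomX (Φ j))
    (P : l2Z →L[ℂ] l2Z)
    (hP : ∀ χ : l2Z, InDomX χ → P χ = posX (U χ) - U (posX χ))
    (φ ψ : l2Z) (hφ : InDomX φ) (hψ : InDomX ψ) (hφ0 : φ ≠ 0) (hψ0 : ψ ≠ 0)
    (hφe : ∃ w : ℂ, U φ = w • φ) (hψe : ∃ z : ℂ, U ψ = z • ψ) :
    Tendsto
      (fun t : ℕ => (1 / (t : ℂ) ^ 2) *
        ∑ s ∈ Finset.range t, ∑ s' ∈ Finset.range t,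
          (inner ℂ (((star U) ^ s) (P ((U ^ s) φ))) (((star U) ^ s') (P ((U ^ s') ψ))) : ℂ))
      atTop (nhds 0) :=
  stmt_5_general U hU P hP φ ψ hφ hψ hφ0 hψ0 hφe hψe

end
end
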